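/- arXiv:1501.07084 — 6 statements merged into one kernel-verified Lean document; each statement's English description precedes it below -/
import Mathlib

section
/- Let k ≥ 2, α > 0, β > 0, and U_1, …, U_{k-1} be reals with 0 < U_i ≤ 1. Suppose C > 0, t_k > 0, and C/t_k ≤ (α/β + 1)/∏_{j=1}^{k-1}(β U_j + 1) − α/β. Then for any reals t_1, …, t_{k-1} ≥ 0, there exists an index j ∈ {1,…,k} such that C + α ∑_{i=1}^{k-1} t_i U_i + β ∑_{i=1}^{j-1} t_i U_i ≤ t_j (where t_k is the given value and empty sums are 0). -/
/-!
Suppose none of the first `k - 1` test points succeeds, i.e. `t j < D + β S_j` for `j < k - 1`,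
where `D = C + α S` and `S_j = ∑_{i<j} t_i U_i`. This is a discrete Grönwall hypothesis, so
`D + β S ≤ D P` with `P = ∏ (β U_j + 1)`. Writing `E = α + β - α P`, the hyperbolic condition
says `C β P ≤ E t_k` (so `E > 0`), while `α β S ≤ α D (P - 1)` gives `E D ≤ β C`. Hence
`E (D + β S) ≤ E D P ≤ β C P ≤ E t_k`, and the last test point succeeds.
-/

open Finset

theorem add_sum_mul_le_mul_prod_add_one {D : ℝ} {w x : ℕ → ℝ} {n : ℕ}
    (hw : ∀ i < n, 0 ≤ w i) (hx : ∀ i < n, x i ≤ D + ∑ l ∈ range i, w l * x l) :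
    D + ∑ i ∈ range n, w i * x i ≤ D * ∏ i ∈ range n, (w i + 1) := by
  induction n with
  | zero => simp
  | succ n ih =>
    have ih := ih (fun i hi => hw i (by omega)) (fun i hi => hx i (by omega))
    have hwn := hw n n.lt_succ_self
    calc D + ∑ i ∈ range (n + 1), w i * x i
        = (D + ∑ i ∈ range n, w i * x i) + w n * x n := by rw [sum_range_succ, add_assoc]
      _ ≤ (D + ∑ i ∈ range n, w i * x i) * (w n + 1) := by
          nlinarith [mul_le_mul_of_nonneg_left (hx n n.lt_succ_self) hwn]
      _ ≤ D * ∏ i ∈ range (n + 1), (w i + 1) := by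
          rw [prod_range_succ, ← mul_assoc]
          exact mul_le_mul_of_nonneg_right ih (by linarith)

theorem add_le_of_div_le_hyperbolic {α β C T S P : ℝ} (hα : 0 ≤ α) (hβ : 0 < β) (hC : 0 < C)
    (hT : 0 < T) (hP : 0 < P) (hcond : C / T ≤ (α / β + 1) / P - α / β)
    (hgrowth : C + α * S + β * S ≤ (C + α * S) * P) :
    C + α * S + β * S ≤ T := by
  set E := α + β - α * P
  have hCE : C * (β * P) ≤ E * T := by
    rwa [show (α / β + 1) / P - α / β = E / (β * P) by field_simp; ring,
      div_le_div_iff₀ hT (by positivity)] at hcond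
  have hE : 0 < E := pos_of_mul_pos_left ((by positivity : 0 < C * (β * P)).trans_le hCE) hT.le
  have hED : E * (C + α * S) ≤ β * C := by nlinarith [mul_le_mul_of_nonneg_left hgrowth hα]
  refine le_of_mul_le_mul_left ?_ hE
  calc E * (C + α * S + β * S) ≤ E * ((C + α * S) * P) := mul_le_mul_of_nonneg_left hgrowth hE.le
    _ = E * (C + α * S) * P := by ring
    _ ≤ β * C * P := mul_le_mul_of_nonneg_right hED hP.le
    _ ≤ E * T := by linarith

theorem stmt_0_general (k : ℕ) (hk : 2 ≤ k) (α β : ℝ) (hα : 0 < α) (hβ : 0 < β)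
    (U : ℕ → ℝ) (hU : ∀ i ∈ Finset.range (k - 1), 0 < U i ∧ U i ≤ 1)
    (C : ℝ) (hC : 0 < C)
    (t : ℕ → ℝ) (htk : 0 < t (k - 1))
    (hcond : C / t (k - 1) ≤
      (α / β + 1) / (∏ j ∈ Finset.range (k - 1), (β * U j + 1)) - α / β) :
    ∃ j ∈ Finset.range k,
      C + α * ∑ i ∈ Finset.range (k - 1), t i * U i
        + β * ∑ i ∈ Finset.range j, t i * U i ≤ t j := by
  set n := k - 1
  set S := ∑ i ∈ range n, t i * U i
  have hβU : ∀ i < n, 0 ≤ β * U i := fun i hi => by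
    have := (hU i (mem_range.2 hi)).1
    positivity
  have hβsum (j : ℕ) : β * ∑ i ∈ range j, t i * U i = ∑ i ∈ range j, β * U i * t i := by
    rw [mul_sum]; exact sum_congr rfl fun i _ => by ring
  by_cases hearly : ∃ j < n, C + α * S + β * ∑ i ∈ range j, t i * U i ≤ t j
  · obtain ⟨j, hj, hsucc⟩ := hearly
    exact ⟨j, mem_range.2 (by omega), hsucc⟩
  push Not at hearly
  have hgrowth : C + α * S + β * S ≤ (C + α * S) * ∏ j ∈ range n, (β * U j + 1) := by
    rw [hβsum]
    refine add_sum_mul_le_mul_prod_add_one hβU fun i hi => ?_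
    rw [← hβsum]
    exact (hearly i hi).le
  refine ⟨n, mem_range.2 (by omega), ?_⟩
  exact add_le_of_div_le_hyperbolic hα.le hβ hC htk
    (prod_pos fun i hi => by linarith [hβU i (mem_range.1 hi)]) hcond hgrowth

/-- k2U Lemma 1 (hyperbolic bound): if `C / t_k` satisfies the hyperbolic
condition then at least one of the `k` test points succeeds. -/
theorem stmt_0 (k : ℕ) (hk : 2 ≤ k) (α β : ℝ) (hα : 0 < α) (hβ : 0 < β)
    (U : ℕ → ℝ) (hU : ∀ i ∈ Finset.range (k - 1), 0 < U i ∧ U i ≤ 1)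
    (C : ℝ) (hC : 0 < C)
    (t : ℕ → ℝ) (htk : 0 < t (k - 1))
    (hcond : C / t (k - 1) ≤
      (α / β + 1) / (∏ j ∈ Finset.range (k - 1), (β * U j + 1)) - α / β)
    (ht : ∀ i ∈ Finset.range (k - 1), 0 ≤ t i) :
    ∃ j ∈ Finset.range k,
      C + α * ∑ i ∈ Finset.range (k - 1), t i * U i
        + β * ∑ i ∈ Finset.range j, t i * U i ≤ t j :=
  stmt_0_general k hk α β hα hβ U hU C hC t htk hcond
end

section
/- Let k ≥ 2, α > 0, β > 0, c ≥ 0 with c + α/β > 0, and U_1, …, U_{k-1} ≥ 0. If β ∑_{i=1}^{k-1} U_i ≤ ln((α/β + 1)/(c + α/β)), then c ≤ (α/β + 1)/∏_{j=1}^{k-1}(β U_j + 1) − α/β. -/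
open Finset Real

theorem prod_add_one_le_exp_sum {ι : Type*} (s : Finset ι) {x : ι → ℝ}
    (hx : ∀ i ∈ s, -1 ≤ x i) : ∏ i ∈ s, (x i + 1) ≤ exp (∑ i ∈ s, x i) := by
  rw [exp_sum]
  exact prod_le_prod (fun i hi => by linarith [hx i hi]) fun i _ => add_one_le_exp (x i)

theorem prod_add_one_le_of_sum_le_log {ι : Type*} (s : Finset ι) {x : ι → ℝ} {R : ℝ}
    (hR : 0 < R) (hx : ∀ i ∈ s, -1 ≤ x i) (h : ∑ i ∈ s, x i ≤ log R) :
    ∏ i ∈ s, (x i + 1) ≤ R :=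
  calc ∏ i ∈ s, (x i + 1) ≤ exp (∑ i ∈ s, x i) := prod_add_one_le_exp_sum s hx
    _ ≤ exp (log R) := exp_le_exp.mpr h
    _ = R := exp_log hR

theorem stmt_4_general (k : ℕ) (α β c : ℝ) (hα : 0 < α) (hβ : 0 < β)
    (hcαβ : 0 < c + α / β)
    (U : ℕ → ℝ) (hU : ∀ i ∈ Finset.range (k - 1), 0 ≤ U i)
    (h : β * ∑ i ∈ Finset.range (k - 1), U i ≤
      Real.log ((α / β + 1) / (c + α / β))) :
    c ≤ (α / β + 1) / (∏ j ∈ Finset.range (k - 1), (β * U j + 1)) - α / β := by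
  have hβU : ∀ j ∈ range (k - 1), 0 ≤ β * U j := fun j hj => mul_nonneg hβ.le (hU j hj)
  have hprod_pos : 0 < ∏ j ∈ range (k - 1), (β * U j + 1) :=
    prod_pos fun j hj => by linarith [hβU j hj]
  have hprod_le : ∏ j ∈ range (k - 1), (β * U j + 1) ≤ (α / β + 1) / (c + α / β) := by
    refine prod_add_one_le_of_sum_le_log _ (by positivity) (fun j hj => ?_) ?_
    · linarith [hβU j hj]
    · rwa [← mul_sum]
  rw [le_sub_iff_add_le, le_div_iff₀ hprod_pos]
  rw [le_div_iff₀ hcαβ] at hprod_le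
  linarith

theorem stmt_4 (k : ℕ) (hk : 2 ≤ k) (α β c : ℝ) (hα : 0 < α) (hβ : 0 < β)
    (hc : 0 ≤ c) (hcαβ : 0 < c + α / β)
    (U : ℕ → ℝ) (hU : ∀ i ∈ Finset.range (k - 1), 0 ≤ U i)
    (h : β * ∑ i ∈ Finset.range (k - 1), U i ≤
      Real.log ((α / β + 1) / (c + α / β))) :
    c ≤ (α / β + 1) / (∏ j ∈ Finset.range (k - 1), (β * U j + 1)) - α / β :=
  stmt_4_general k α β c hα hβ hcαβ U hU h
end

section
/- Let k ≥ 2, and for i = 1, …, k−1 let α_i > 0, β_i > 0, 0 < U_i ≤ 1. Suppose C > 0, t_k > 0 and C/t_k ≤ 1 − ∑_{i=1}^{k-1} U_i(α_i + β_i)/∏_{j=i}^{k-1}(β_j U_j + 1). Then for all reals t_1, …, t_{k-1} ≥ 0, there exists j ∈ {1,…,k} with C + ∑_{i=1}^{k-1} α_i t_i U_i + ∑_{i=1}^{j-1} β_i t_i U_i ≤ t_j (with t_k the given value). -/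
/-!
Suppose the test fails at every point: `t j < X + ∑_{i<j} β_i U_i t_i` for all `j ≤ k - 1`, where
`X = C + ∑ α_i U_i t_i`. Inductively the right-hand side is at most `X Q_j` with
`Q_j = ∏_{i<j} (β_i U_i + 1)`, so `t_j < X Q_j` and `∑ α_i U_i t_i ≤ X T` for `T = ∑ α_i U_i Q_i`.
Since `∑ β_i U_i Q_i` telescopes to `Q_{k-1} - 1`, the hypothesis on `C / t_{k-1}` reads
`C Q_{k-1} ≤ t_{k-1} (1 - T)`, which forces either `C ≤ 0` or `C < X (1 - T) ≤ C`.
-/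

open Finset

theorem Finset.sum_mul_prod_range_add_one {R : Type*} [CommRing R] (b : ℕ → R) (n : ℕ) :
    ∑ i ∈ range n, b i * ∏ j ∈ range i, (b j + 1) = ∏ i ∈ range n, (b i + 1) - 1 := by
  induction n with
  | zero => simp
  | succ n ih => rw [sum_range_succ, ih, prod_range_succ]; ring

theorem Finset.sum_div_prod_Ico_eq {K : Type*} [Field K] (b c : ℕ → K) (n : ℕ)
    (hQ : ∏ i ∈ range n, (b i + 1) ≠ 0) :
    ∑ i ∈ range n, c i / ∏ j ∈ Ico i n, (b j + 1) =
      (∑ i ∈ range n, c i * ∏ j ∈ range i, (b j + 1)) / ∏ i ∈ range n, (b i + 1) := by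
  rw [sum_div]
  refine sum_congr rfl fun i hi => ?_
  rw [← prod_range_mul_prod_Ico _ (mem_range.1 hi).le] at hQ ⊢
  rw [mul_comm (c i), mul_div_mul_left _ _ (left_ne_zero_of_mul hQ)]

section

variable {K : Type*} [Field K] [LinearOrder K] [IsStrictOrderedRing K]

theorem add_sum_mul_le_mul_prod_add_one_s8 {b t : ℕ → K} {X : K} {n : ℕ}
    (hb : ∀ i < n, 0 ≤ b i) (ht : ∀ j < n, t j ≤ X + ∑ i ∈ range j, b i * t i) :
    X + ∑ i ∈ range n, b i * t i ≤ X * ∏ i ∈ range n, (b i + 1) := by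
  induction n with
  | zero => simp
  | succ n ih =>
    have ih := ih (fun i hi => hb i (by omega)) (fun j hj => ht j (by omega))
    have htn : t n ≤ X * ∏ i ∈ range n, (b i + 1) := (ht n n.lt_succ_self).trans ih
    rw [sum_range_succ, prod_range_succ]
    nlinarith [mul_le_mul_of_nonneg_left htn (hb n n.lt_succ_self)]

theorem exists_add_sum_le_of_div_le_one_sub {n : ℕ} {a b t : ℕ → K} {C : K}
    (ha : ∀ i < n, 0 ≤ a i) (hb : ∀ i < n, 0 ≤ b i) (hC : 0 < C) (htn : 0 < t n)
    (hcond : C / t n ≤ 1 - ∑ i ∈ range n, (a i + b i) / ∏ j ∈ Ico i n, (b j + 1)) :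
    ∃ j ≤ n, C + ∑ i ∈ range n, a i * t i + ∑ i ∈ range j, b i * t i ≤ t j := by
  by_contra! hfail
  set Q : ℕ → K := fun j => ∏ i ∈ range j, (b i + 1)
  set X := C + ∑ i ∈ range n, a i * t i
  have hQ : 0 < Q n := prod_pos fun i hi => by linarith [hb i (mem_range.1 hi)]
  have ht_lt : ∀ j ≤ n, t j < X * Q j := fun j hj =>
    (hfail j hj).trans_le <| add_sum_mul_le_mul_prod_add_one_s8 (fun i hi => hb i (by omega))
      fun i hi => (hfail i (by omega)).le
  set T := ∑ i ∈ range n, a i * Q i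
  have hA : ∑ i ∈ range n, a i * t i ≤ X * T := by
    rw [mul_sum]
    refine sum_le_sum fun i hi => ?_
    have hi := mem_range.1 hi
    nlinarith [mul_le_mul_of_nonneg_left (ht_lt i hi.le).le (ha i hi)]
  have hsum : ∑ i ∈ range n, (a i + b i) / ∏ j ∈ Ico i n, (b j + 1) = (T + (Q n - 1)) / Q n := by
    rw [sum_div_prod_Ico_eq _ _ _ hQ.ne', ← sum_mul_prod_range_add_one, ← sum_add_distrib]
    simp only [add_mul, Q]
  have hcond' : C * Q n ≤ t n * (1 - T) := by
    rw [hsum, div_le_iff₀ htn] at hcond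
    calc C * Q n ≤ (1 - (T + (Q n - 1)) / Q n) * t n * Q n := by gcongr
      _ = t n * (1 - T) := by field_simp; ring
  rcases le_or_gt (1 - T) 0 with hT | hT
  · nlinarith [mul_nonpos_of_nonneg_of_nonpos htn.le hT]
  · nlinarith [mul_lt_mul_of_pos_right (ht_lt n le_rfl) hT]

end

theorem stmt_8_general (k : ℕ) (hk : 2 ≤ k) (α β U : ℕ → ℝ)
    (hα : ∀ i ∈ Finset.range (k - 1), 0 < α i)
    (hβ : ∀ i ∈ Finset.range (k - 1), 0 < β i)
    (hU : ∀ i ∈ Finset.range (k - 1), 0 < U i ∧ U i ≤ 1)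
    (C : ℝ) (hC : 0 < C)
    (t : ℕ → ℝ) (htk : 0 < t (k - 1))
    (hcond : C / t (k - 1) ≤
      1 - ∑ i ∈ Finset.range (k - 1),
            U i * (α i + β i) / ∏ j ∈ Finset.Ico i (k - 1), (β j * U j + 1)) :
    ∃ j ∈ Finset.range k,
      C + ∑ i ∈ Finset.range (k - 1), α i * t i * U i
        + ∑ i ∈ Finset.range j, β i * t i * U i ≤ t j := by
  have hcond' : C / t (k - 1) ≤ 1 - ∑ i ∈ range (k - 1),
      (α i * U i + β i * U i) / ∏ j ∈ Ico i (k - 1), (β j * U j + 1) := by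
    simpa only [mul_comm (U _), add_mul] using hcond
  obtain ⟨j, hj, hle⟩ := exists_add_sum_le_of_div_le_one_sub
    (fun i hi => (mul_pos (hα i (mem_range.2 hi)) (hU i (mem_range.2 hi)).1).le)
    (fun i hi => (mul_pos (hβ i (mem_range.2 hi)) (hU i (mem_range.2 hi)).1).le) hC htk hcond'
  refine ⟨j, mem_range.2 (by omega), ?_⟩
  simpa only [mul_right_comm _ (t _)] using hle

/-- k2U Lemma 4 (general, per-task coefficients). -/
theorem stmt_8 (k : ℕ) (hk : 2 ≤ k) (α β U : ℕ → ℝ)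
    (hα : ∀ i ∈ Finset.range (k - 1), 0 < α i)
    (hβ : ∀ i ∈ Finset.range (k - 1), 0 < β i)
    (hU : ∀ i ∈ Finset.range (k - 1), 0 < U i ∧ U i ≤ 1)
    (C : ℝ) (hC : 0 < C)
    (t : ℕ → ℝ) (htk : 0 < t (k - 1))
    (hcond : C / t (k - 1) ≤
      1 - ∑ i ∈ Finset.range (k - 1),
            U i * (α i + β i) / ∏ j ∈ Finset.Ico i (k - 1), (β j * U j + 1))
    (ht : ∀ i ∈ Finset.range (k - 1), 0 ≤ t i) :
    ∃ j ∈ Finset.range k,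
      C + ∑ i ∈ Finset.range (k - 1), α i * t i * U i
        + ∑ i ∈ Finset.range j, β i * t i * U i ≤ t j :=
  stmt_8_general k hk α β U hα hβ hU C hC t htk hcond
end

section
/- Let ℓ ≥ 2 and let α_i > 0, β_i > 0, U_i > 0 for i = 1, …, ℓ−1, with α_ℓ > 0, β_ℓ > 0, U_ℓ > 0 as well. If ∑_{i=1}^{ℓ-1} U_i(α_i + β_i)/∏_{j=i}^{ℓ-1}(β_j U_j + 1) ≥ 1, then for any k > ℓ and any further α_i, β_i > 0, U_i > 0 for ℓ ≤ i ≤ k−1, one has ∑_{i=1}^{k-1} U_i(α_i + β_i)/∏_{j=i}^{k-1}(β_j U_j + 1) ≥ 1. -/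
/-!
Writing `S m = ∑_{i < m} f i / ∏_{i ≤ j < m} g j`, one has `S (m + 1) = (S m + f m) / g m`.
With `f = U (α + β)` and `g = β U + 1` we get `g m ≤ f m + 1`, so `S m ≥ 1` forces
`S (m + 1) ≥ 1`, and induction carries the bound from `ℓ - 1` to `k - 1`.
-/

open Finset

noncomputable def weightedTailSum (f g : ℕ → ℝ) (m : ℕ) : ℝ :=
  ∑ i ∈ range m, f i / ∏ j ∈ Ico i m, g j

lemma weightedTailSum_succ (f g : ℕ → ℝ) (m : ℕ) :
    weightedTailSum f g (m + 1) = (weightedTailSum f g m + f m) / g m := by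
  have hprod : ∀ i ∈ range m, ∏ j ∈ Ico i (m + 1), g j = (∏ j ∈ Ico i m, g j) * g m :=
    fun i hi => prod_Ico_succ_top (mem_range.mp hi).le _
  simp only [weightedTailSum, sum_range_succ, add_div, sum_div]
  rw [Nat.Ico_succ_singleton, prod_singleton]
  exact congrArg (· + _) (sum_congr rfl fun i hi => by rw [hprod i hi, div_div])

lemma one_le_weightedTailSum_of_le {f g : ℕ → ℝ} {m n : ℕ} (hmn : m ≤ n)
    (hg : ∀ j ∈ Ico m n, 0 < g j) (hfg : ∀ j ∈ Ico m n, g j ≤ f j + 1)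
    (hm : 1 ≤ weightedTailSum f g m) : 1 ≤ weightedTailSum f g n := by
  induction n, hmn using Nat.le_induction with
  | base => exact hm
  | succ n hmn ih =>
    have hn : n ∈ Ico m (n + 1) := mem_Ico.mpr ⟨hmn, n.lt_succ_self⟩
    have hsub : Ico m n ⊆ Ico m (n + 1) := Ico_subset_Ico_right n.le_succ
    have ih' := ih (fun j hj => hg j (hsub hj)) (fun j hj => hfg j (hsub hj))
    rw [weightedTailSum_succ, le_div_iff₀ (hg n hn)]
    linarith [hfg n hn]

theorem stmt_9_general (ℓ k : ℕ) (hk : ℓ < k) (α β U : ℕ → ℝ)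
    (hα : ∀ i ∈ Finset.range (k - 1), 0 < α i)
    (hβ : ∀ i ∈ Finset.range (k - 1), 0 < β i)
    (hU : ∀ i ∈ Finset.range (k - 1), 0 < U i)
    (hpre : 1 ≤ ∑ i ∈ Finset.range (ℓ - 1),
        U i * (α i + β i) / ∏ j ∈ Finset.Ico i (ℓ - 1), (β j * U j + 1)) :
    1 ≤ ∑ i ∈ Finset.range (k - 1),
        U i * (α i + β i) / ∏ j ∈ Finset.Ico i (k - 1), (β j * U j + 1) := by
  have hrange : ∀ j ∈ Ico (ℓ - 1) (k - 1), j ∈ range (k - 1) :=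
    fun j hj => mem_range.mpr (mem_Ico.mp hj).2
  refine one_le_weightedTailSum_of_le (f := fun i => U i * (α i + β i))
    (g := fun j => β j * U j + 1) (by omega) (fun j hj => ?_) (fun j hj => ?_) hpre
  · have := hβ j (hrange j hj); have := hU j (hrange j hj); positivity
  · have := hα j (hrange j hj); have := hU j (hrange j hj)
    nlinarith

theorem stmt_9 (ℓ k : ℕ) (hℓ : 2 ≤ ℓ) (hk : ℓ < k) (α β U : ℕ → ℝ)
    (hα : ∀ i ∈ Finset.range (k - 1), 0 < α i)
    (hβ : ∀ i ∈ Finset.range (k - 1), 0 < β i)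
    (hU : ∀ i ∈ Finset.range (k - 1), 0 < U i)
    (hpre : 1 ≤ ∑ i ∈ Finset.range (ℓ - 1),
        U i * (α i + β i) / ∏ j ∈ Finset.Ico i (ℓ - 1), (β j * U j + 1)) :
    1 ≤ ∑ i ∈ Finset.range (k - 1),
        U i * (α i + β i) / ∏ j ∈ Finset.Ico i (k - 1), (β j * U j + 1) :=
  stmt_9_general ℓ k hk α β U hα hβ hU hpre
end

section
/- Minimize c + (k−1)·U over reals c ≥ 0, U ≥ 0 subject to the constraint (c + α/β)(β U + 1)^{k-1} ≥ α/β + 1, where k ≥ 2, α > 0, β > 0 with 1 ≤ (α+β)^{1/k} and α ≤ (α+β)^{1/k}. The minimum value equals ((k−1)((α+β)^{1/k} − 1) + ((α+β)^{1/k} − α))/β, attained at U = ((α+β)^{1/k} − 1)/β and c = ((α+β)^{1/k} − α)/β. -/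
/-!
Substituting `x = β c + α` and `y = β U + 1` turns the constraint into `α + β ≤ x y^(k-1)` and the
objective into `(x + (k-1) y - α - (k-1)) / β`. By AM-GM, `x + (k-1) y ≥ k (x y^(k-1))^(1/k) ≥ k t`
with `t = (α + β)^(1/k)`, with equality at `x = y = t`.
-/

/-- AM-GM, via Bernoulli's inequality for `r = mean / y`. -/
lemma mul_pow_le_add_mul_div_pow {x y : ℝ} (hx : 0 ≤ x) (hy : 0 < y) (n : ℕ) :
    x * y ^ n ≤ ((x + n * y) / (n + 1)) ^ (n + 1) := by
  set r := (x + n * y) / ((n + 1) * y)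
  have hr : 0 ≤ r := by positivity
  have hbernoulli : 1 + ((n + 1 : ℕ) : ℝ) * (r - 1) ≤ r ^ (n + 1) := by
    simpa using one_add_mul_le_pow (a := r - 1) (by linarith) (n + 1)
  have hlin : 1 + ((n + 1 : ℕ) : ℝ) * (r - 1) = x / y := by
    simp only [r]; push_cast; field_simp; ring
  calc x * y ^ n = x / y * y ^ (n + 1) := by field_simp; ring
    _ ≤ r ^ (n + 1) * y ^ (n + 1) := by gcongr; rwa [hlin] at hbernoulli
    _ = ((x + n * y) / (n + 1)) ^ (n + 1) := by rw [← mul_pow]; simp only [r]; field_simp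

lemma add_mul_le_of_pow_le_mul_pow {t x y : ℝ} (hx : 0 ≤ x) (hy : 0 < y) (n : ℕ)
    (h : t ^ (n + 1) ≤ x * y ^ n) : (n + 1) * t ≤ x + n * y := by
  have hmean : t ≤ (x + n * y) / (n + 1) :=
    le_of_pow_le_pow_left₀ n.succ_ne_zero (by positivity)
      (h.trans (mul_pow_le_add_mul_div_pow hx hy n))
  rwa [le_div_iff₀ (by positivity), mul_comm] at hmean

theorem stmt_16 (k : ℕ) (hk : 2 ≤ k) (α β : ℝ) (hα : 0 < α) (hβ : 0 < β)
    (h1 : 1 ≤ (α + β) ^ ((1 : ℝ) / k)) (h2 : α ≤ (α + β) ^ ((1 : ℝ) / k)) :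
    IsLeast
      {v : ℝ | ∃ c U : ℝ, 0 ≤ c ∧ 0 ≤ U ∧
        α / β + 1 ≤ (c + α / β) * (β * U + 1) ^ (k - 1) ∧
        v = c + ((k : ℝ) - 1) * U}
      ((((k : ℝ) - 1) * ((α + β) ^ ((1 : ℝ) / k) - 1)
          + ((α + β) ^ ((1 : ℝ) / k) - α)) / β)
    ∧ ((α + β) ^ ((1 : ℝ) / k) - α) / β
        + ((k : ℝ) - 1) * (((α + β) ^ ((1 : ℝ) / k) - 1) / β)
      = (((k : ℝ) - 1) * ((α + β) ^ ((1 : ℝ) / k) - 1)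
          + ((α + β) ^ ((1 : ℝ) / k) - α)) / β
    ∧ α / β + 1 ≤ (((α + β) ^ ((1 : ℝ) / k) - α) / β + α / β)
        * (β * (((α + β) ^ ((1 : ℝ) / k) - 1) / β) + 1) ^ (k - 1) := by
  obtain ⟨n, rfl⟩ : ∃ n, k = n + 1 := ⟨k - 1, by omega⟩
  have hn : ((n + 1 : ℕ) : ℝ) - 1 = n := by push_cast; ring
  simp only [Nat.add_sub_cancel, hn] at h1 h2 ⊢
  set t := (α + β) ^ ((1 : ℝ) / (n + 1 : ℕ))
  have htpow : t ^ (n + 1) = α + β := by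
    simp only [t, one_div]; exact Real.rpow_inv_natCast_pow (by positivity) n.succ_ne_zero
  have hfeasible : α / β + 1 ≤ ((t - α) / β + α / β) * (β * ((t - 1) / β) + 1) ^ n := by
    have : ((t - α) / β + α / β) * (β * ((t - 1) / β) + 1) ^ n = t ^ (n + 1) / β := by
      field_simp; ring
    rw [this, htpow, add_div, div_self hβ.ne']
  refine ⟨⟨⟨_, _, div_nonneg (by linarith) hβ.le, div_nonneg (by linarith) hβ.le, hfeasible,
    by ring⟩, ?_⟩, by ring, hfeasible⟩
  rintro v ⟨c, U, hc, hU, hconstraint, rfl⟩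
  have hproduct : t ^ (n + 1) ≤ (β * c + α) * (β * U + 1) ^ n := by
    calc t ^ (n + 1) = (α / β + 1) * β := by rw [htpow]; field_simp
      _ ≤ (c + α / β) * (β * U + 1) ^ n * β := by gcongr
      _ = (β * c + α) * (β * U + 1) ^ n := by field_simp
  have hmean := add_mul_le_of_pow_le_mul_pow (by positivity) (by positivity) n hproduct
  rw [div_le_iff₀ hβ]
  linarith
end

section
/- Let k ≥ 2, β > 0, and T > 0 (a fixed target). Among all c ≥ 0 and U_1,…,U_{k-1} ≥ 0 with c + ∑ U_i ≤ ((k−1)((α+β)^{1/k}−1) + ((α+β)^{1/k}−α))/β, where α > 0 and 1 ≤ (α+β)^{1/k}, α ≤ (α+β)^{1/k}, the hyperbolic condition c ≤ (α/β+1)/∏_{j=1}^{k-1}(βU_j+1) − α/β holds. -/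
/-!
Put `x = (α + β) ^ (1 / k)`, so that `x ^ k = α + β`. The `k` nonnegative numbers
`β c + α` and `β U_j + 1` (`j < k - 1`) have sum at most `k x` by the utilization bound, so by
AM-GM their product `(β c + α) ∏ (β U_j + 1)` is at most `x ^ k = α + β`; dividing by
`β ∏ (β U_j + 1)` gives the hyperbolic condition.
-/

open Finset

namespace Real

theorem prod_le_pow_card_of_sum_le {ι : Type*} {s : Finset ι} {z : ι → ℝ} {x : ℝ}
    (hz : ∀ i ∈ s, 0 ≤ z i) (hsum : ∑ i ∈ s, z i ≤ #s * x) :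
    ∏ i ∈ s, z i ≤ x ^ #s := by
  rcases s.eq_empty_or_nonempty with rfl | hs
  · simp
  have hcard : (0 : ℝ) < #s := by exact_mod_cast hs.card_pos
  have hmean : (∏ i ∈ s, z i) ^ ((#s : ℝ)⁻¹) ≤ x := by
    have amgm := geom_mean_le_arith_mean s (fun _ ↦ 1) z (fun _ _ ↦ zero_le_one)
      (by simpa using hcard) hz
    simp only [rpow_one, sum_const, nsmul_eq_mul, mul_one, one_mul] at amgm
    exact amgm.trans ((div_le_iff₀' hcard).2 hsum)
  calc ∏ i ∈ s, z i = ((∏ i ∈ s, z i) ^ ((#s : ℝ)⁻¹)) ^ #s :=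
        (rpow_inv_natCast_pow (prod_nonneg hz) hs.card_pos.ne').symm
    _ ≤ x ^ #s := pow_le_pow_left₀ (rpow_nonneg (prod_nonneg hz) _) hmean _

theorem mul_prod_le_pow_of_add_sum_le {ι : Type*} {s : Finset ι} {a x : ℝ} {f : ι → ℝ}
    (ha : 0 ≤ a) (hf : ∀ i ∈ s, 0 ≤ f i) (hsum : a + ∑ i ∈ s, f i ≤ (#s + 1) * x) :
    a * ∏ i ∈ s, f i ≤ x ^ (#s + 1) := by
  rw [mul_prod_eq_prod_insertNone, ← card_insertNone]
  refine prod_le_pow_card_of_sum_le ?_ ?_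
  · rintro (_ | i) hi
    exacts [ha, hf i (mem_insertNone.1 hi i rfl)]
  · simpa [sum_insertNone] using hsum

end Real

theorem le_div_sub_div_of_mul_le {α β c P : ℝ} (hβ : 0 < β) (hP : 0 < P)
    (h : (β * c + α) * P ≤ α + β) :
    c ≤ (α / β + 1) / P - α / β := by
  rw [le_sub_iff_add_le, le_div_iff₀ hP]
  calc (c + α / β) * P = (β * c + α) * P / β := by field_simp
    _ ≤ (α + β) / β := div_le_div_of_nonneg_right h hβ.le
    _ = α / β + 1 := by field_simp

theorem stmt_17_general (k : ℕ) (hk : 2 ≤ k) (α β : ℝ) (hα : 0 < α) (hβ : 0 < β)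
    (c : ℝ) (hc : 0 ≤ c)
    (U : ℕ → ℝ) (hU : ∀ i ∈ Finset.range (k - 1), 0 ≤ U i)
    (hsum : c + ∑ i ∈ Finset.range (k - 1), U i ≤
      (((k : ℝ) - 1) * ((α + β) ^ ((1 : ℝ) / k) - 1)
        + ((α + β) ^ ((1 : ℝ) / k) - α)) / β) :
    c ≤ (α / β + 1) / (∏ j ∈ Finset.range (k - 1), (β * U j + 1)) - α / β := by
  set x := (α + β) ^ ((1 : ℝ) / k) with hx
  have hk1 : k - 1 + 1 = k := by omega
  have hxk : x ^ k = α + β := by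
    rw [hx, one_div]
    exact Real.rpow_inv_natCast_pow (by positivity) (by omega)
  have hfactors : ∀ j ∈ range (k - 1), 0 < β * U j + 1 := fun j hj ↦ by
    have := hU j hj; positivity
  have hfactors_sum : (β * c + α) + ∑ j ∈ range (k - 1), (β * U j + 1)
      ≤ (#(range (k - 1)) + 1) * x := by
    rw [sum_add_distrib, ← mul_sum, sum_const, card_range, nsmul_one,
      Nat.cast_sub (by omega : 1 ≤ k)]
    have := (le_div_iff₀' hβ).1 hsum
    push_cast
    linarith
  have hprod := Real.mul_prod_le_pow_of_add_sum_le (by positivity)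
    (fun j hj ↦ (hfactors j hj).le) hfactors_sum
  rw [card_range, hk1, hxk] at hprod
  exact le_div_sub_div_of_mul_le hβ (prod_pos hfactors) hprod

theorem stmt_17 (k : ℕ) (hk : 2 ≤ k) (α β T : ℝ) (hα : 0 < α) (hβ : 0 < β)
    (hT : 0 < T)
    (h1 : 1 ≤ (α + β) ^ ((1 : ℝ) / k)) (h2 : α ≤ (α + β) ^ ((1 : ℝ) / k))
    (c : ℝ) (hc : 0 ≤ c)
    (U : ℕ → ℝ) (hU : ∀ i ∈ Finset.range (k - 1), 0 ≤ U i)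
    (hsum : c + ∑ i ∈ Finset.range (k - 1), U i ≤
      (((k : ℝ) - 1) * ((α + β) ^ ((1 : ℝ) / k) - 1)
        + ((α + β) ^ ((1 : ℝ) / k) - α)) / β) :
    c ≤ (α / β + 1) / (∏ j ∈ Finset.range (k - 1), (β * U j + 1)) - α / β :=
  stmt_17_general k hk α β hα hβ c hc U hU hsum
end
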